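/- MIC sufficient condition for the ℓ_{1-2}-REC: Suppose ‖A_i‖_2 = 1 for each column i of A, and the mutual incoherence constant μ := max_{i≠j} |A_jᵀ A_i| satisfies μ < (√t − 1)/((s+t)(√t − 1) + 2√(t(s+t))(√s + 1)). Then A satisfies the ℓ_{1-2}-REC(s,t), with φ(s,t) ≥ (1 − (s+t)μ − 2μ√(t(s+t))(√s+1)/(√t−1))^{1/2} > 0. -/

import Mathlib

open Finset

noncomputable def l1 {k : ℕ} (x : Fin k → ℝ) : ℝ := ∑ i, |x i|

noncomputable def l2 {k : ℕ} (x : Fin k → ℝ) : ℝ := Real.sqrt (∑ i, (x i)^2)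

def restr {k : ℕ} (I : Finset (Fin k)) (x : Fin k → ℝ) : Fin k → ℝ :=
  fun i => if i ∈ I then x i else 0


def TLargest {k : ℕ} (x : Fin k → ℝ) (I : Finset (Fin k)) (t : ℕ) (T : Finset (Fin k)) : Prop :=
  T ⊆ Iᶜ ∧ T.card = min t Iᶜ.card ∧ ∀ i ∈ T, ∀ j ∈ Iᶜ \ T, |x j| ≤ |x i|

/-
Split `x = y + z` with `y` supported on `J = I ∪ T`. Mutual incoherence of the unit columns gives
`‖Ay‖₂² ≥ ‖y‖₂² - μ (‖y‖₁² - ‖y‖₂²)` and `|⟪Ay, Az⟫| ≤ μ ‖y‖₁ ‖z‖₁`, and `‖y‖₁ ≤ √(s+t) ‖y‖₂`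
since `|J| ≤ s + t`. Every entry of the tail `z` is at most the average `‖x_{Iᶜ}‖₁ / t` of the `t`
largest ones, so `√t ‖z‖₂ ≤ ‖x_{Iᶜ}‖₁`; combined with the cone condition and
`‖x‖₂ ≤ ‖y‖₂ + ‖z‖₂` this yields `(√t - 1) ‖x_{Iᶜ}‖₁ ≤ √t (√s + 1) ‖y‖₂`, which controls the
cross term and leaves `‖Ax‖₂² ≥ φ² ‖y‖₂²` with `φ²` the bound of the statement.
-/

open Matrix

section Norms

variable {k : ℕ}

lemma l1_nonneg (x : Fin k → ℝ) : 0 ≤ l1 x :=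
  sum_nonneg fun _ _ => abs_nonneg _

lemma l2_nonneg (x : Fin k → ℝ) : 0 ≤ l2 x := Real.sqrt_nonneg _

lemma sq_l2 (x : Fin k → ℝ) : l2 x ^ 2 = x ⬝ᵥ x := by
  rw [l2, Real.sq_sqrt (sum_nonneg fun _ _ => sq_nonneg _)]
  simp only [dotProduct, sq]

lemma l2_eq_norm (x : Fin k → ℝ) : l2 x = ‖(WithLp.toLp 2 x : EuclideanSpace ℝ (Fin k))‖ := by
  simp [l2, EuclideanSpace.norm_eq]

lemma l2_add_le (x y : Fin k → ℝ) : l2 (x + y) ≤ l2 x + l2 y := by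
  simpa only [l2_eq_norm, WithLp.toLp_add] using norm_add_le _ _

lemma l1_restr (J : Finset (Fin k)) (x : Fin k → ℝ) : l1 (restr J x) = ∑ i ∈ J, |x i| := by
  simp only [l1, restr, apply_ite abs, abs_zero, sum_ite_mem, univ_inter]

lemma l2_restr (J : Finset (Fin k)) (x : Fin k → ℝ) :
    l2 (restr J x) = √(∑ i ∈ J, x i ^ 2) := by
  simp only [l2, restr, ite_pow, zero_pow two_ne_zero, sum_ite_mem, univ_inter]

lemma restr_add_restr_compl (J : Finset (Fin k)) (x : Fin k → ℝ) :
    restr J x + restr Jᶜ x = x := by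
  ext i
  by_cases hi : i ∈ J <;> simp [restr, hi]

lemma restr_mul_restr_compl (J : Finset (Fin k)) (x : Fin k → ℝ) (i : Fin k) :
    restr J x i * restr Jᶜ x i = 0 := by
  by_cases hi : i ∈ J <;> simp [restr, hi]

lemma l1_restr_mono {J K : Finset (Fin k)} (h : J ⊆ K) (x : Fin k → ℝ) :
    l1 (restr J x) ≤ l1 (restr K x) := by
  simpa only [l1_restr] using sum_le_sum_of_subset_of_nonneg h fun _ _ _ => abs_nonneg _

lemma l2_restr_mono {J K : Finset (Fin k)} (h : J ⊆ K) (x : Fin k → ℝ) :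
    l2 (restr J x) ≤ l2 (restr K x) := by
  simpa only [l2_restr] using
    Real.sqrt_le_sqrt (sum_le_sum_of_subset_of_nonneg h fun _ _ _ => sq_nonneg _)

lemma l1_restr_le_sqrt_card_mul (J : Finset (Fin k)) (x : Fin k → ℝ) :
    l1 (restr J x) ≤ √(#J : ℝ) * l2 (restr J x) := by
  rw [l1_restr, l2_restr, ← Real.sqrt_mul (Nat.cast_nonneg _),
    Real.le_sqrt (sum_nonneg fun _ _ => abs_nonneg _) (by positivity)]
  simpa only [sq_abs] using sq_sum_le_card_mul_sum_sq (s := J) (f := fun i => |x i|)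

end Norms

section Gram

variable {m n : ℕ}

lemma dotProduct_mulVec_eq_diag_add_offDiag (G : Matrix (Fin n) (Fin n) ℝ) (y z : Fin n → ℝ) :
    y ⬝ᵥ G *ᵥ z = ∑ i, G i i * (y i * z i) + ∑ i, ∑ j ∈ univ.erase i, y i * G i j * z j := by
  simp only [dotProduct, mulVec, mul_sum, ← sum_add_distrib]
  refine sum_congr rfl fun i _ => ?_
  rw [← add_sum_erase _ _ (mem_univ i)]
  congr 1
  · ring
  · exact sum_congr rfl fun j _ => by ring

lemma abs_dotProduct_mulVec_sub_diag_le {G : Matrix (Fin n) (Fin n) ℝ} {μ : ℝ}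
    (hG : ∀ i j, i ≠ j → |G i j| ≤ μ) (y z : Fin n → ℝ) :
    |y ⬝ᵥ G *ᵥ z - ∑ i, G i i * (y i * z i)| ≤ μ * (l1 y * l1 z - ∑ i, |y i * z i|) := by
  rw [dotProduct_mulVec_eq_diag_add_offDiag, add_sub_cancel_left]
  calc |∑ i, ∑ j ∈ univ.erase i, y i * G i j * z j|
      ≤ ∑ i, ∑ j ∈ univ.erase i, |y i| * μ * |z j| := by
        refine (abs_sum_le_sum_abs _ _).trans <| sum_le_sum fun i _ =>
          (abs_sum_le_sum_abs _ _).trans <| sum_le_sum fun j hj => ?_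
        rw [abs_mul, abs_mul]
        gcongr
        exact hG i j (ne_of_mem_erase hj).symm
    _ = ∑ i, μ * (|y i| * l1 z - |y i * z i|) := by
        refine sum_congr rfl fun i _ => ?_
        rw [sum_erase_eq_sub (mem_univ i), ← mul_sum, l1, abs_mul]
        ring
    _ = μ * (l1 y * l1 z - ∑ i, |y i * z i|) := by
        rw [← mul_sum, sum_sub_distrib, ← sum_mul]; rfl

lemma mulVec_dotProduct_mulVec (A : Matrix (Fin m) (Fin n) ℝ) (y z : Fin n → ℝ) :
    A *ᵥ y ⬝ᵥ A *ᵥ z = y ⬝ᵥ (Aᵀ * A) *ᵥ z := by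
  rw [← mulVec_mulVec, dotProduct_mulVec y, vecMul_transpose]

lemma sq_l2_mulVec_add_ge (A : Matrix (Fin m) (Fin n) ℝ) {μ : ℝ}
    (hcol : ∀ i, ∑ k, (A k i)^2 = 1) (hμ : ∀ i j, i ≠ j → |∑ k, A k j * A k i| ≤ μ)
    (y z : Fin n → ℝ) (hdisj : ∀ i, y i * z i = 0) :
    l2 y ^ 2 - μ * (l1 y ^ 2 - l2 y ^ 2) - 2 * μ * (l1 y * l1 z) ≤ l2 (A *ᵥ (y + z)) ^ 2 := by
  have hdiag : ∀ i, (Aᵀ * A) i i = 1 := fun i => by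
    simpa only [mul_apply, transpose_apply, sq] using hcol i
  have hoff : ∀ i j, i ≠ j → |(Aᵀ * A) i j| ≤ μ := fun i j hij => by
    simpa only [mul_apply, transpose_apply] using hμ j i hij.symm
  have hyy := abs_le.mp (abs_dotProduct_mulVec_sub_diag_le hoff y y)
  have hyz := abs_le.mp (abs_dotProduct_mulVec_sub_diag_le hoff y z)
  simp only [hdiag, one_mul, hdisj, abs_zero, sum_const_zero, mul_zero, sub_zero] at hyy hyz
  have hAz := sq_nonneg (l2 (A *ᵥ z))
  rw [sq_l2] at hAz
  rw [sq_l2, sq_l2, mulVec_add, add_dotProduct, dotProduct_add, dotProduct_add,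
    mulVec_dotProduct_mulVec, mulVec_dotProduct_mulVec, dotProduct_comm (A *ᵥ z),
    mulVec_dotProduct_mulVec]
  have hself : ∑ i, y i * y i = y ⬝ᵥ y := rfl
  simp only [abs_mul_self] at hyy
  rw [hself, ← sq] at hyy
  linarith [hyy.1, hyz.1]

end Gram

namespace TLargest

variable {k t : ℕ} {x : Fin k → ℝ} {I T : Finset (Fin k)}

lemma card_le (hT : TLargest x I t T) : #T ≤ t :=
  hT.2.1 ▸ min_le_left _ _

lemma card_eq_of_mem_sdiff (hT : TLargest x I t T) {j : Fin k} (hj : j ∈ Iᶜ \ T) : #T = t := by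
  obtain ⟨hsub, hcard, -⟩ := hT
  rcases min_choice t #Iᶜ with h | h
  · rw [hcard, h]
  · rw [h] at hcard
    have := eq_of_subset_of_card_le hsub hcard.ge
    exact absurd (this ▸ (mem_sdiff.mp hj).1) (mem_sdiff.mp hj).2

lemma natCast_mul_abs_le (hT : TLargest x I t T) {j : Fin k} (hj : j ∈ Iᶜ \ T) :
    t * |x j| ≤ l1 (restr Iᶜ x) :=
  calc t * |x j| = ∑ _i ∈ T, |x j| := by
        rw [sum_const, hT.card_eq_of_mem_sdiff hj, nsmul_eq_mul]
    _ ≤ ∑ i ∈ T, |x i| := sum_le_sum fun i hi => hT.2.2 i hi j hj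
    _ ≤ l1 (restr Iᶜ x) := by
        rw [l1_restr]
        exact sum_le_sum_of_subset_of_nonneg hT.1 fun _ _ _ => abs_nonneg _

lemma sqrt_mul_l2_restr_compl_le (hT : TLargest x I t T) :
    √t * l2 (restr (I ∪ T)ᶜ x) ≤ l1 (restr Iᶜ x) := by
  set c := l1 (restr Iᶜ x)
  have htail : (I ∪ T)ᶜ ⊆ Iᶜ := compl_subset_compl.mpr subset_union_left
  have hsq : t * ∑ j ∈ (I ∪ T)ᶜ, x j ^ 2 ≤ c ^ 2 :=
    calc t * ∑ j ∈ (I ∪ T)ᶜ, x j ^ 2 = ∑ j ∈ (I ∪ T)ᶜ, t * |x j| * |x j| := by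
          rw [mul_sum]
          exact sum_congr rfl fun j _ => by rw [mul_assoc, abs_mul_abs_self, sq]
      _ ≤ ∑ j ∈ (I ∪ T)ᶜ, c * |x j| := sum_le_sum fun j hj =>
          mul_le_mul_of_nonneg_right
            (hT.natCast_mul_abs_le (by simpa [sdiff_eq_inter_compl] using hj)) (abs_nonneg _)
      _ = c * l1 (restr (I ∪ T)ᶜ x) := by rw [l1_restr, mul_sum]
      _ ≤ c ^ 2 := by
          rw [sq]
          exact mul_le_mul_of_nonneg_left (l1_restr_mono htail x) (l1_nonneg _)
  rw [l2_restr, ← Real.sqrt_mul (Nat.cast_nonneg _)]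
  exact (Real.sqrt_le_left (l1_nonneg _)).mpr hsq

lemma l1_restr_compl_mul_le (hT : TLargest x I t T) {s : ℕ} (hI : #I ≤ s)
    (hcone : l1 (restr Iᶜ x) ≤ l1 (restr I x) + l2 x) :
    l1 (restr Iᶜ x) * (√t - 1) ≤ √t * (√s + 1) * l2 (restr (I ∪ T) x) := by
  set b := l2 (restr (I ∪ T) x)
  have hx : l2 x ≤ b + l2 (restr (I ∪ T)ᶜ x) := by
    simpa only [restr_add_restr_compl] using l2_add_le (restr (I ∪ T) x) (restr (I ∪ T)ᶜ x)
  have hxI : l1 (restr I x) ≤ √s * b :=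
    (l1_restr_le_sqrt_card_mul I x).trans <| mul_le_mul
      (Real.sqrt_le_sqrt (by exact_mod_cast hI)) (l2_restr_mono subset_union_left x)
      (l2_nonneg _) (Real.sqrt_nonneg _)
  have := mul_le_mul_of_nonneg_left (hcone.trans (add_le_add hxI hx)) (Real.sqrt_nonneg t)
  linarith [hT.sqrt_mul_l2_restr_compl_le]

end TLargest

noncomputable def phiSqBound (s t : ℕ) (μ : ℝ) : ℝ :=
  1 - (s + t) * μ - 2 * μ * Real.sqrt (t * (s + t)) * (Real.sqrt s + 1) / (Real.sqrt t - 1)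

lemma sqrt_natCast_sub_one_pos {t : ℕ} (ht : 1 < t) : 0 < √(t : ℝ) - 1 :=
  sub_pos.mpr <| Real.lt_sqrt_of_sq_lt (by rw [one_pow]; exact_mod_cast ht)

lemma phiSqBound_pos {s t : ℕ} {μ : ℝ} (ht : 1 < t)
    (hcond : μ < (Real.sqrt t - 1) /
      ((s + t) * (Real.sqrt t - 1) + 2 * Real.sqrt (t * (s + t)) * (Real.sqrt s + 1))) :
    0 < phiSqBound s t μ := by
  have hr : 0 < √(t : ℝ) - 1 := sqrt_natCast_sub_one_pos ht
  have hden : 0 < ((s : ℝ) + t) * (√t - 1) + 2 * √(t * ((s : ℝ) + t)) * (√s + 1) := by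
    have : (0 : ℝ) < s + t := by positivity
    positivity
  have hlt := (lt_div_iff₀ hden).mp hcond
  have : phiSqBound s t μ = ((√t - 1) - μ * (((s : ℝ) + t) * (√t - 1) +
      2 * √(t * ((s : ℝ) + t)) * (√s + 1))) / (√t - 1) := by
    rw [phiSqBound]
    field_simp
    ring
  rw [this]
  exact div_pos (by linarith) hr

lemma phiSqBound_mul_sq_l2_restr_le {m n : ℕ} (A : Matrix (Fin m) (Fin n) ℝ) {s t : ℕ}
    (ht : 1 < t) {μ : ℝ} (hμ0 : 0 ≤ μ) (hcol : ∀ i, ∑ k, (A k i)^2 = 1)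
    (hμ : ∀ i j, i ≠ j → |∑ k, A k j * A k i| ≤ μ)
    {x : Fin n → ℝ} {I T : Finset (Fin n)} (hI : #I ≤ s)
    (hcone : l1 (restr Iᶜ x) ≤ l1 (restr I x) + l2 x) (hT : TLargest x I t T) :
    phiSqBound s t μ * l2 (restr (I ∪ T) x) ^ 2 ≤ l2 (A *ᵥ x) ^ 2 := by
  set J := I ∪ T
  set b := l2 (restr J x)
  set L := l1 (restr J x)
  set c := l1 (restr Iᶜ x)
  have hr : 0 < √(t : ℝ) - 1 := sqrt_natCast_sub_one_pos ht
  have hAx := sq_l2_mulVec_add_ge A hcol hμ _ _ (restr_mul_restr_compl J x)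
  rw [restr_add_restr_compl] at hAx
  have hL : L ≤ √((s : ℝ) + t) * b := by
    have hJ : (#J : ℝ) ≤ s + t := by
      exact_mod_cast (card_union_le I T).trans (add_le_add hI hT.card_le)
    exact (l1_restr_le_sqrt_card_mul J x).trans
      (mul_le_mul_of_nonneg_right (Real.sqrt_le_sqrt hJ) (l2_nonneg _))
  have hL2 : L ^ 2 ≤ (s + t) * b ^ 2 := by
    calc L ^ 2 ≤ (√((s : ℝ) + t) * b) ^ 2 := pow_le_pow_left₀ (l1_nonneg _) hL 2
      _ = (s + t) * b ^ 2 := by rw [mul_pow, Real.sq_sqrt (by positivity)]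
  have hc : c ≤ √t * (√s + 1) * b / (√t - 1) :=
    (le_div_iff₀ hr).mpr (hT.l1_restr_compl_mul_le hI hcone)
  have ha : l1 (restr Jᶜ x) ≤ c := l1_restr_mono (compl_subset_compl.mpr subset_union_left) x
  have hLa : L * l1 (restr Jᶜ x) ≤ √((s : ℝ) + t) * b * (√t * (√s + 1) * b / (√t - 1)) :=
    mul_le_mul hL (ha.trans hc) (l1_nonneg _)
      (mul_nonneg (Real.sqrt_nonneg _) (l2_nonneg _))
  have hD : phiSqBound s t μ * b ^ 2 = b ^ 2 - (s + t) * μ * b ^ 2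
      - 2 * μ * (√((s : ℝ) + t) * b * (√t * (√s + 1) * b / (√t - 1))) := by
    rw [phiSqBound, Real.sqrt_mul (Nat.cast_nonneg t)]
    ring
  rw [hD]
  linarith [mul_le_mul_of_nonneg_left hLa hμ0, mul_le_mul_of_nonneg_left hL2 hμ0,
    mul_nonneg hμ0 (sq_nonneg b)]

theorem stmt16 {m n : ℕ} (A : Matrix (Fin m) (Fin n) ℝ) (s t : ℕ) (ht : 1 < t)
    (μ : ℝ) (hμ0 : 0 ≤ μ)
    (hcol : ∀ i, ∑ k, (A k i)^2 = 1)
    (hμ : ∀ i j, i ≠ j → |∑ k, A k j * A k i| ≤ μ)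
    (hcond : μ < (Real.sqrt t - 1) /
      ((s + t) * (Real.sqrt t - 1) + 2 * Real.sqrt (t * (s + t)) * (Real.sqrt s + 1))) :
    0 < 1 - (s + t) * μ - 2 * μ * Real.sqrt (t * (s + t)) * (Real.sqrt s + 1) / (Real.sqrt t - 1) ∧
    ∀ (x : Fin n → ℝ) (I T : Finset (Fin n)), I.card ≤ s →
      l1 (restr Iᶜ x) ≤ l1 (restr I x) + l2 x → TLargest x I t T →
      Real.sqrt (1 - (s + t) * μ -
          2 * μ * Real.sqrt (t * (s + t)) * (Real.sqrt s + 1) / (Real.sqrt t - 1)) *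
        l2 (restr (I ∪ T) x) ≤ l2 (A.mulVec x) := by
  have hpos : 0 < phiSqBound s t μ := phiSqBound_pos ht hcond
  refine ⟨hpos, fun x I T hI hcone hT => ?_⟩
  have hsq := phiSqBound_mul_sq_l2_restr_le A ht hμ0 hcol hμ hI hcone hT
  calc √(phiSqBound s t μ) * l2 (restr (I ∪ T) x)
      = √(phiSqBound s t μ * l2 (restr (I ∪ T) x) ^ 2) := by
        rw [Real.sqrt_mul hpos.le, Real.sqrt_sq (l2_nonneg _)]
    _ ≤ √(l2 (A *ᵥ x) ^ 2) := Real.sqrt_le_sqrt hsq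
    _ = l2 (A *ᵥ x) := Real.sqrt_sq (l2_nonneg _)
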